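/- For all A in SL(9,ℂ) and u, v in Λ³(ℂ⁹), one has A ∘ (u × v) ∘ A⁻¹ = (Au) × ((Aᵀ)⁻¹ v), where × denotes the cross product endomorphism of ℂ⁹. -/

import Mathlib

open scoped BigOperators
open Matrix

noncomputable section

/-- Index type for a basis of `Λᵏ(ℂ⁹)`: subsets of `Fin 9` of cardinality `k`. -/
abbrev Idx (k : ℕ) : Type := {s : Finset (Fin 9) // s.card = k}

/-- `Λᵏ(ℂ⁹)` in coordinates with respect to the basis `e_{i₁} ∧ ⋯ ∧ e_{i_k}`, `i₁ < ⋯ < i_k`. -/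
abbrev Lam (k : ℕ) : Type := Idx k → ℂ

/-- Sign obtained when sorting the increasing enumeration of `s` followed by that of `t`. -/
def sgn (s t : Finset (Fin 9)) : ℂ :=
  (-1 : ℂ) ^ (∑ i ∈ s, (t.filter (fun j => j < i)).card)

/-- Wedge product `Λᵏ × Λˡ → Λ^{k+l}`. -/
def wedge {k l : ℕ} (u : Lam k) (v : Lam l) : Lam (k + l) := fun w =>
  ∑ s ∈ (w.1.powerset.filter fun s => s.card = k).attach,
    sgn s.1 (w.1 \ s.1) *
      u ⟨s.1, by
        have hs := s.2
        simp only [Finset.mem_filter] at hs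
        exact hs.2⟩ *
      v ⟨w.1 \ s.1, by
        have hs := s.2
        simp only [Finset.mem_filter, Finset.mem_powerset] at hs
        rw [Finset.card_sdiff_of_subset hs.1, w.2, hs.2]
        omega⟩

/-- The Hodge star operator `Λᵏ → Λˡ`, `k + l = 9`, characterized by
`(⋆u, v) = (u ∧ v, e₁ ∧ ⋯ ∧ e₉)`. -/
def hstar {k l : ℕ} (h : k + l = 9) (u : Lam k) : Lam l := fun t =>
  sgn t.1ᶜ t.1 *
    u ⟨t.1ᶜ, by
      rw [Finset.card_compl, t.2]
      simp only [Fintype.card_fin]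
      omega⟩

def star3 : Lam 3 → Lam 6 := hstar (by norm_num)
def star4 : Lam 4 → Lam 5 := hstar (by norm_num)
def star6 : Lam 6 → Lam 3 := hstar (by norm_num)
def star8 : Lam 8 → Lam 1 := hstar (by norm_num)

/-- The bilinear form on `Λᵏ(ℂ⁹)` induced by the standard bilinear form of `ℂ⁹`
(the Gram determinant form); the chosen basis is orthonormal for it. -/
def ip {k : ℕ} (u v : Lam k) : ℂ := ∑ s, u s * v s

/-- The standard bilinear form on `ℂ⁹`. -/
def ip9 (x y : Fin 9 → ℂ) : ℂ := ∑ i, x i * y i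

/-- A vector of `ℂ⁹` viewed as an element of `Λ¹(ℂ⁹)`. -/
def vec (x : Fin 9 → ℂ) : Lam 1 := fun s => ∑ i ∈ s.1, x i

/-- An element of `Λ¹(ℂ⁹)` viewed as a vector of `ℂ⁹`. -/
def unvec (u : Lam 1) : Fin 9 → ℂ := fun i => u ⟨{i}, Finset.card_singleton i⟩

/-- The `k × k` minor of `A` with rows `s` and columns `t` (in increasing order). -/
def minor {k : ℕ} (A : Matrix (Fin 9) (Fin 9) ℂ) (s t : Idx k) : ℂ :=
  Matrix.det (Matrix.of fun i j : Fin k =>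
    A (s.1.orderIsoOfFin s.2 i) (t.1.orderIsoOfFin t.2 j))

/-- The natural action of a matrix `A` on `Λᵏ(ℂ⁹)`:
`A(u₁ ∧ ⋯ ∧ u_k) = Au₁ ∧ ⋯ ∧ Au_k`, in coordinates given by minors (Cauchy–Binet). -/
def act {k : ℕ} (A : Matrix (Fin 9) (Fin 9) ℂ) (u : Lam k) : Lam k := fun s =>
  ∑ t, minor A s t * u t

/-- Coordinate matrix of the derivation action of `D` on `Λᵏ(ℂ⁹)`
(the differential of `act` at the identity). -/
def dminor {k : ℕ} (D : Matrix (Fin 9) (Fin 9) ℂ) (s t : Idx k) : ℂ :=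
  ∑ m : Fin k, Matrix.det (Matrix.of fun i j : Fin k =>
    if i = m then D (s.1.orderIsoOfFin s.2 i) (t.1.orderIsoOfFin t.2 j)
    else if (s.1.orderIsoOfFin s.2 i : Fin 9) = (t.1.orderIsoOfFin t.2 j : Fin 9) then 1 else 0)

/-- The derivation action of `D` on `Λᵏ(ℂ⁹)`:
`D(u₁ ∧ u₂ ∧ u₃) = Du₁ ∧ u₂ ∧ u₃ + u₁ ∧ Du₂ ∧ u₃ + u₁ ∧ u₂ ∧ Du₃`. -/
def der {k : ℕ} (D : Matrix (Fin 9) (Fin 9) ℂ) (u : Lam k) : Lam k := fun s =>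
  ∑ t, dminor D s t * u t

/-- The endomorphism `u × v` of `ℂ⁹`: `(u × v)x = ⋆(v ∧ ⋆(u ∧ x)) + (2/3)(u,v)x`. -/
def crossApp (u v : Lam 3) (x : Fin 9 → ℂ) : Fin 9 → ℂ := fun i =>
  unvec (star8 (wedge v (star4 (wedge u (vec x))))) i + (2 / 3 : ℂ) * ip u v * x i

/-- The matrix of the endomorphism `u × v` of `ℂ⁹`. -/
def crossMat (u v : Lam 3) : Matrix (Fin 9) (Fin 9) ℂ :=
  Matrix.of fun i j => crossApp u v (fun l => if l = j then 1 else 0) i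

/-!
The action `act A` of a matrix on `Λᵏ(ℂ⁹)` is multiplication by the `k`-th compound matrix of `A`.
Laplace expansion of minors shows that it commutes with wedging by a vector; since every basis
vector of `Λᵏ⁺¹` is the wedge of one of `Λᵏ` with one of `Λ¹`, it then respects all wedge products
and is multiplicative in `A`. As `⋆` is defined by `u ∧ w = (⋆u, w) e₁ ∧ ⋯ ∧ e₉` and `A` acts on
`Λ⁹` by `det A`, this gives `⋆(Au) = det A • (Aᵀ)⁻¹(⋆u)`. Pushing `Ax` through the formula for
`(Au) × ((Aᵀ)⁻¹v)`, the two Hodge stars contribute `det A` and `det (Aᵀ)⁻¹`, which cancel, and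
`(Au, (Aᵀ)⁻¹v) = (u, v)`.
-/

open Finset

section Enumeration

variable {k : ℕ}

def enum (s : Idx k) : Fin k ↪o Fin 9 := s.1.orderEmbOfFin s.2

lemma coe_orderIsoOfFin_eq_enum (s : Idx k) (i : Fin k) :
    (s.1.orderIsoOfFin s.2 i : Fin 9) = enum s i := rfl

lemma enum_mem (s : Idx k) (i : Fin k) : enum s i ∈ s.1 := s.1.orderEmbOfFin_mem s.2 i

lemma exists_enum_eq (s : Idx k) {x : Fin 9} (hx : x ∈ s.1) : ∃ i, enum s i = x := by
  rw [← mem_coe, ← s.1.range_orderEmbOfFin s.2] at hx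
  exact hx

lemma card_filter_eq_card_filter_enum (s : Idx k) (p : Fin 9 → Prop) [DecidablePred p] :
    #{x ∈ s.1 | p x} = #{i | p (enum s i)} := by
  conv_lhs => rw [← s.1.map_orderEmbOfFin_univ s.2]
  rw [filter_map, card_map]
  rfl

lemma card_filter_enum_lt (s : Idx k) (i : Fin k) : #{x ∈ s.1 | enum s i < x} = k - 1 - i := by
  simp [card_filter_eq_card_filter_enum, filter_lt_eq_Ioi]

def eraseEnum (w : Idx (k + 1)) (r : Fin (k + 1)) : Idx k :=
  ⟨w.1.erase (enum w r), by rw [card_erase_of_mem (enum_mem w r), w.2]; rfl⟩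

lemma enum_eraseEnum (w : Idx (k + 1)) (r : Fin (k + 1)) (m : Fin k) :
    enum (eraseEnum w r) m = enum w (r.succAbove m) := by
  refine congrFun (orderEmbOfFin_unique _ (fun i => ?_) ((enum w).strictMono.comp
    (Fin.strictMono_succAbove r))).symm m
  exact mem_erase.2 ⟨(enum w).injective.ne (Fin.succAbove_ne r i), enum_mem w _⟩

lemma eraseEnum_injective (w : Idx (k + 1)) : Function.Injective (eraseEnum w) := fun r _ h =>
  (enum w).injective ((erase_inj w.1 (enum_mem w r)).1 (congrArg Subtype.val h))

def idx1 (i : Fin 9) : Idx 1 := ⟨{i}, card_singleton i⟩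

lemma enum_idx1 (i : Fin 9) (m : Fin 1) : enum (idx1 i) m = i :=
  orderEmbOfFin_singleton i m

def idx1Equiv : Fin 9 ≃ Idx 1 where
  toFun := idx1
  invFun s := enum s 0
  left_inv i := enum_idx1 i 0
  right_inv s := by
    obtain ⟨a, ha⟩ := card_eq_one.1 s.2
    obtain rfl : s = idx1 a := Subtype.ext ha
    exact congrArg idx1 (enum_idx1 a 0)

@[simp] lemma idx1Equiv_apply (i : Fin 9) : idx1Equiv i = idx1 i := rfl

end Enumeration

section Sign

lemma sgn_union_left {s t : Finset (Fin 9)} (r : Finset (Fin 9)) (h : Disjoint s t) :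
    sgn (s ∪ t) r = sgn s r * sgn t r := by
  rw [sgn, sgn, sgn, ← pow_add, ← sum_union h]

lemma sgn_union_right (s : Finset (Fin 9)) {t r : Finset (Fin 9)} (h : Disjoint t r) :
    sgn s (t ∪ r) = sgn s t * sgn s r := by
  rw [sgn, sgn, sgn, ← pow_add, ← sum_add_distrib]
  congr 1
  refine sum_congr rfl fun i _ => ?_
  rw [filter_union, card_union_of_disjoint (disjoint_filter_filter h)]

lemma sgn_singleton_right (s : Finset (Fin 9)) (j : Fin 9) :
    sgn s {j} = (-1 : ℂ) ^ #{x ∈ s | j < x} := by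
  rw [sgn, card_filter]
  congr 1
  refine sum_congr rfl fun i _ => ?_
  rw [filter_singleton]
  split <;> simp

lemma neg_one_pow_sub {R : Type*} [Ring R] {a b : ℕ} (h : b ≤ a) :
    (-1 : R) ^ (a - b) = (-1) ^ (a + b) := by
  rw [show a + b = (a - b) + 2 * b by omega, pow_add, pow_mul]
  simp

lemma sgn_insert_enum {k : ℕ} (w : Idx (k + 1)) (r : Fin (k + 1)) {P : Finset (Fin 9)}
    (hP : insert (enum w r) P = w.1) :
    sgn P {enum w r} = (-1 : ℂ) ^ (k + r) := by
  have hfilter : {x ∈ P | enum w r < x} = {x ∈ w.1 | enum w r < x} := by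
    rw [← hP, filter_insert, if_neg (lt_irrefl _)]
  rw [sgn_singleton_right, hfilter, card_filter_enum_lt, add_tsub_cancel_right,
    neg_one_pow_sub (Nat.lt_succ_iff.1 r.2)]

end Sign

section Wedge

variable {k l : ℕ}

lemma wedge_apply (u : Lam k) (v : Lam l) (w : Idx (k + l)) :
    wedge u v w = ∑ s : Idx k, if h : s.1 ⊆ w.1 then
      sgn s.1 (w.1 \ s.1) * u s *
        v ⟨w.1 \ s.1, by rw [card_sdiff_of_subset h, w.2, s.2]; omega⟩
      else 0 := by
  have subset_of_ne {s : Idx k} (hs : (if h : s.1 ⊆ w.1 then sgn s.1 (w.1 \ s.1) * u s *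
      v ⟨w.1 \ s.1, by rw [card_sdiff_of_subset h, w.2, s.2]; omega⟩ else 0) ≠ 0) :
      s.1 ⊆ w.1 := by
    by_contra h
    exact hs (dif_neg h)
  symm
  refine sum_bij_ne_zero
    (fun s _ hs => ⟨s.1, mem_filter.2 ⟨mem_powerset.2 (subset_of_ne hs), s.2⟩⟩)
    (fun _ _ _ => mem_attach _ _) (fun s _ _ t _ _ h => Subtype.ext (congrArg (·.1) h))
    (fun b _ hb => ?_) (fun s _ hs => dif_pos (subset_of_ne hs))
  obtain ⟨hbw, hbk⟩ := mem_filter.1 b.2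
  exact ⟨⟨b.1, hbk⟩, mem_univ _, by rwa [dif_pos (mem_powerset.1 hbw)], rfl⟩

lemma wedge_add_left (u u' : Lam k) (v : Lam l) : wedge (u + u') v = wedge u v + wedge u' v := by
  funext w
  simp only [wedge, Pi.add_apply, mul_add, add_mul, sum_add_distrib]

lemma wedge_smul_left (c : ℂ) (u : Lam k) (v : Lam l) : wedge (c • u) v = c • wedge u v := by
  funext w
  simp only [wedge, Pi.smul_apply, smul_eq_mul, mul_sum]
  exact sum_congr rfl fun _ _ => by ring

lemma wedge_add_right (u : Lam k) (v v' : Lam l) : wedge u (v + v') = wedge u v + wedge u v' := by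
  funext w
  simp only [wedge, Pi.add_apply, mul_add, sum_add_distrib]

lemma wedge_smul_right (c : ℂ) (u : Lam k) (v : Lam l) : wedge u (c • v) = c • wedge u v := by
  funext w
  simp only [wedge, Pi.smul_apply, smul_eq_mul, mul_sum]
  exact sum_congr rfl fun _ _ => by ring

variable (k l) in
def wedgeₗ : Lam k →ₗ[ℂ] Lam l →ₗ[ℂ] Lam (k + l) :=
  LinearMap.mk₂ ℂ wedge wedge_add_left wedge_smul_left wedge_add_right wedge_smul_right

@[simp] lemma wedgeₗ_apply (u : Lam k) (v : Lam l) : wedgeₗ k l u v = wedge u v := rfl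

lemma wedge_zero_left (v : Lam l) : wedge (0 : Lam k) v = 0 := LinearMap.map_zero₂ (wedgeₗ k l) v

lemma wedge_zero_right (u : Lam k) : wedge u (0 : Lam l) = 0 := map_zero (wedgeₗ k l u)

def idxUnion (S : Idx k) (T : Idx l) (h : Disjoint S.1 T.1) : Idx (k + l) :=
  ⟨S.1 ∪ T.1, by rw [card_union_of_disjoint h, S.2, T.2]⟩

lemma coe_idxUnion (S : Idx k) (T : Idx l) (h : Disjoint S.1 T.1) :
    (idxUnion S T h).1 = S.1 ∪ T.1 := rfl

lemma wedge_single_single (S : Idx k) (T : Idx l) :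
    wedge (Pi.single S 1) (Pi.single T 1) = if h : Disjoint S.1 T.1 then
      sgn S.1 T.1 • Pi.single (idxUnion S T h) 1 else 0 := by
  funext w
  rw [wedge_apply, sum_eq_single S (fun s _ hs => by simp [hs]) (by simp)]
  simp only [Pi.single_apply, if_pos, mul_one, mul_ite, mul_zero]
  by_cases hw : S.1 ⊆ w.1 ∧ w.1 \ S.1 = T.1
  · obtain ⟨hsub, hdiff⟩ := hw
    have hd : Disjoint S.1 T.1 := hdiff ▸ disjoint_sdiff
    obtain rfl : w = idxUnion S T hd :=
      Subtype.ext (show w.1 = S.1 ∪ T.1 by rw [← hdiff, union_sdiff_of_subset hsub])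
    simp [hsub, hd, hdiff]
  · have hne (hd : Disjoint S.1 T.1) : w ≠ idxUnion S T hd := by
      rintro rfl
      exact hw ⟨subset_union_left, union_sdiff_cancel_left hd⟩
    rw [dite_eq_right_iff.2 fun hsub => if_neg fun h => hw ⟨hsub, congrArg Subtype.val h⟩]
    split_ifs with hd
    · simp [hne hd]
    · rfl

end Wedge

section Compound

variable {k l : ℕ}

def compound (A : Matrix (Fin 9) (Fin 9) ℂ) : Matrix (Idx k) (Idx k) ℂ := Matrix.of (minor A)

lemma act_eq_mulVec (A : Matrix (Fin 9) (Fin 9) ℂ) (u : Lam k) : act A u = compound A *ᵥ u := rfl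

def actₗ (A : Matrix (Fin 9) (Fin 9) ℂ) : Lam k →ₗ[ℂ] Lam k := (compound A).mulVecLin

@[simp] lemma actₗ_apply (A : Matrix (Fin 9) (Fin 9) ℂ) (u : Lam k) : actₗ A u = act A u := rfl

lemma act_single (A : Matrix (Fin 9) (Fin 9) ℂ) (T s : Idx k) :
    act A (Pi.single T 1) s = minor A s T := by
  simp [act, Pi.single_apply]

lemma minor_idx1 (A : Matrix (Fin 9) (Fin 9) ℂ) (i j : Fin 9) :
    minor A (idx1 i) (idx1 j) = A i j := by
  simp only [minor, coe_orderIsoOfFin_eq_enum, enum_idx1]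
  exact det_fin_one _

lemma act_apply_idx1 (A : Matrix (Fin 9) (Fin 9) ℂ) (x : Lam 1) (i : Fin 9) :
    act A x (idx1 i) = ∑ j, A i j * x (idx1 j) := by
  rw [act, ← idx1Equiv.sum_comp]
  simp only [idx1Equiv, Equiv.coe_fn_mk, minor_idx1]

lemma minor_eq_sum_column (A : Matrix (Fin 9) (Fin 9) ℂ) (w Q : Idx (k + 1)) (c : Fin (k + 1)) :
    minor A w Q = ∑ r : Fin (k + 1), (-1 : ℂ) ^ ((r : ℕ) + c) * A (enum w r) (enum Q c) *
      minor A (eraseEnum w r) (eraseEnum Q c) := by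
  simp only [minor, coe_orderIsoOfFin_eq_enum, enum_eraseEnum]
  exact det_succ_column _ c

lemma sum_column_eq_zero_of_mem (A : Matrix (Fin 9) (Fin 9) ℂ) (P : Idx k) {j : Fin 9}
    (hj : j ∈ P.1) (w : Idx (k + 1)) :
    ∑ r : Fin (k + 1), (-1 : ℂ) ^ ((r : ℕ) + k) * A (enum w r) j *
      minor A (eraseEnum w r) P = 0 := by
  obtain ⟨p, rfl⟩ := exists_enum_eq P hj
  let N : Matrix (Fin (k + 1)) (Fin (k + 1)) ℂ :=
    Matrix.of fun r c => A (enum w r) (Fin.snoc (α := fun _ => Fin 9) (enum P) (enum P p) c)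
  have hN : N.det = 0 :=
    det_zero_of_column_eq (Fin.castSucc_lt_last p).ne fun r => by simp [N]
  rw [det_succ_column N (Fin.last k)] at hN
  simp only [minor, coe_orderIsoOfFin_eq_enum, enum_eraseEnum]
  simpa [N, Fin.succAbove_last, submatrix] using hN

lemma wedge_act_single_apply (A : Matrix (Fin 9) (Fin 9) ℂ) (P : Idx k) (j : Fin 9)
    (w : Idx (k + 1)) :
    wedge (act A (Pi.single P 1)) (act A (Pi.single (idx1 j) 1)) w =
      ∑ r : Fin (k + 1), (-1 : ℂ) ^ ((r : ℕ) + k) * A (enum w r) j * minor A (eraseEnum w r) P := by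
  rw [wedge_apply, ← sum_subset (subset_univ (univ.image (eraseEnum w))),
    sum_image (eraseEnum_injective w).injOn]
  · refine sum_congr rfl fun r _ => ?_
    have hsub : (eraseEnum w r).1 ⊆ w.1 := erase_subset _ _
    have hdiff : w.1 \ (eraseEnum w r).1 = {enum w r} := sdiff_erase_self (enum_mem w r)
    rw [dif_pos hsub, act_single, act_single,
      show (⟨_, _⟩ : Idx 1) = idx1 (enum w r) from Subtype.ext hdiff, minor_idx1, hdiff,
      sgn_insert_enum w r (P := (eraseEnum w r).1) (insert_erase (enum_mem w r))]
    ring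
  · intro s _ hs
    refine dif_neg fun hsub => hs ?_
    obtain ⟨a, ha⟩ := card_eq_one.1 (show #(w.1 \ s.1) = 1 by
      rw [card_sdiff_of_subset hsub, w.2, s.2]; omega)
    obtain ⟨r, rfl⟩ := exists_enum_eq w (mem_sdiff.1 (ha ▸ mem_singleton_self a)).1
    refine mem_image.2 ⟨r, mem_univ _, Subtype.ext ?_⟩
    show w.1.erase (enum w r) = s.1
    rw [erase_eq, ← ha, Finset.sdiff_sdiff_eq_self hsub]

lemma act_wedge_single_idx1 (A : Matrix (Fin 9) (Fin 9) ℂ) (P : Idx k) (j : Fin 9) :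
    act A (wedge (Pi.single P 1) (Pi.single (idx1 j) 1)) =
      wedge (act A (Pi.single P 1)) (act A (Pi.single (idx1 j) 1)) := by
  funext w
  rw [wedge_act_single_apply, wedge_single_single]
  by_cases hj : j ∈ P.1
  · rw [dif_neg (by simpa [idx1] using hj), sum_column_eq_zero_of_mem A P hj]
    simp [act]
  -- `j` sits in column `c` of `P ∪ {j}`; expand the minor along that column.
  have hd : Disjoint P.1 (idx1 j).1 := by simpa [idx1] using hj
  set Q := idxUnion P (idx1 j) hd
  obtain ⟨c, hc⟩ := exists_enum_eq Q (mem_union_right _ (mem_singleton_self j))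
  have hinsert : insert (enum Q c) P.1 = Q.1 := by
    rw [hc, insert_eq, union_comm]
    rfl
  have hP : eraseEnum Q c = P := Subtype.ext <| by
    show Q.1.erase (enum Q c) = P.1
    rw [← hinsert, erase_insert (hc ▸ hj)]
  have hsign (r : ℕ) : (-1 : ℂ) ^ (k + c) * (-1) ^ (r + c) = (-1) ^ (r + k) := by
    rw [← pow_add, show k + c + (r + c) = r + k + 2 * c by ring, pow_add, pow_mul]
    simp
  rw [dif_pos hd, act_eq_mulVec, mulVec_smul, Pi.smul_apply, ← act_eq_mulVec, act_single,
    smul_eq_mul, minor_eq_sum_column A w Q c, hP, show (idx1 j).1 = {enum Q c} by rw [hc]; rfl,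
    sgn_insert_enum Q c hinsert, mul_sum, hc]
  refine sum_congr rfl fun r _ => ?_
  rw [← hsign r]
  ring

lemma act_wedge_deg_one (A : Matrix (Fin 9) (Fin 9) ℂ) (u : Lam k) (x : Lam 1) :
    act A (wedge u x) = wedge (act A u) (act A x) := by
  have h : (wedgeₗ k 1).compr₂ (actₗ A) = (wedgeₗ k 1).compl₁₂ (actₗ A) (actₗ A) :=
    LinearMap.ext_basis (Pi.basisFun ℂ _) (Pi.basisFun ℂ _) fun P q => by
      obtain ⟨j, rfl⟩ := idx1Equiv.surjective q
      simpa using act_wedge_single_idx1 A P j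
  exact LinearMap.congr_fun₂ h u x

lemma wedge_single_assoc (S : Idx k) (T : Idx l) (R : Idx 1) :
    wedge (wedge (Pi.single S 1) (Pi.single T 1)) (Pi.single R 1) =
      wedge (Pi.single S 1) (wedge (Pi.single T 1) (Pi.single R 1)) := by
  rw [wedge_single_single S T, wedge_single_single T R]
  by_cases hST : Disjoint S.1 T.1; swap
  · rw [dif_neg hST, wedge_zero_left]
    split_ifs with hTR
    · rw [wedge_smul_right, wedge_single_single, dif_neg, smul_zero]
      rw [coe_idxUnion]
      exact fun h => hST (disjoint_union_right.1 h).1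
    · rw [wedge_zero_right]
  by_cases hTR : Disjoint T.1 R.1; swap
  · rw [dif_pos hST, dif_neg hTR, wedge_zero_right, wedge_smul_left, wedge_single_single, dif_neg,
      smul_zero]
    rw [coe_idxUnion]
    exact fun h => hTR (disjoint_union_left.1 h).2
  rw [dif_pos hST, dif_pos hTR, wedge_smul_left, wedge_smul_right, wedge_single_single,
    wedge_single_single]
  by_cases hSR : Disjoint S.1 R.1; swap
  · rw [dif_neg, dif_neg, smul_zero, smul_zero] <;> rw [coe_idxUnion]
    · exact fun h => hSR (disjoint_union_right.1 h).2
    · exact fun h => hSR (disjoint_union_left.1 h).1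
  rw [dif_pos, dif_pos, smul_smul, smul_smul]
  · simp only [idxUnion, sgn_union_left _ hST, sgn_union_right _ hTR, union_assoc]
    congr 1
    ring
  · exact disjoint_union_right.2 ⟨hST, hSR⟩
  · exact disjoint_union_left.2 ⟨hSR, hTR⟩

lemma wedge_assoc (u : Lam k) (v : Lam l) (x : Lam 1) :
    wedge (wedge u v) x = wedge u (wedge v x) := by
  have hx (S : Idx k) (T : Idx l) : wedgeₗ (k + l) 1 (wedge (Pi.single S 1) (Pi.single T 1)) =
      wedgeₗ k (l + 1) (Pi.single S 1) ∘ₗ wedgeₗ l 1 (Pi.single T 1) :=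
    (Pi.basisFun ℂ _).ext fun R => by simpa using wedge_single_assoc S T R
  have huv : (wedgeₗ k l).compr₂ ((wedgeₗ (k + l) 1).flip x) =
      (wedgeₗ k (l + 1)).compl₂ ((wedgeₗ l 1).flip x) :=
    LinearMap.ext_basis (Pi.basisFun ℂ _) (Pi.basisFun ℂ _) fun S T => by
      simpa using LinearMap.congr_fun (hx S T) x
  simpa using LinearMap.congr_fun₂ huv u v

lemma single_eq_wedge (T : Idx (l + 1)) :
    Pi.single T 1 = wedge (Pi.single (eraseEnum T (Fin.last l)) 1)
      (Pi.single (idx1 (enum T (Fin.last l))) 1) := by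
  have hd : Disjoint (eraseEnum T (Fin.last l)).1 (idx1 (enum T (Fin.last l))).1 :=
    disjoint_singleton_right.2 (notMem_erase _ _)
  have hinsert : insert (enum T (Fin.last l)) (eraseEnum T (Fin.last l)).1 = T.1 :=
    insert_erase (enum_mem _ _)
  rw [wedge_single_single, dif_pos hd, show (idx1 (enum T (Fin.last l))).1 = {enum T (Fin.last l)}
    from rfl, sgn_insert_enum T _ hinsert, Fin.val_last, ← two_mul, pow_mul, neg_one_sq, one_pow,
    one_smul]
  congr
  exact Subtype.ext (by rw [coe_idxUnion, union_comm]; exact hinsert.symm.trans (insert_eq _ _))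

lemma linearMap_ext_wedge {M : Type*} [AddCommMonoid M] [Module ℂ M]
    {f g : Lam (l + 1) →ₗ[ℂ] M} (h : ∀ (S : Lam l) (x : Lam 1), f (wedge S x) = g (wedge S x)) :
    f = g :=
  (Pi.basisFun ℂ _).ext fun T => by rw [Pi.basisFun_apply, single_eq_wedge T]; exact h _ _

lemma act_wedge (A : Matrix (Fin 9) (Fin 9) ℂ) (u : Lam k) :
    ∀ {l : ℕ} (v : Lam (l + 1)), act A (wedge u v) = wedge (act A u) (act A v)
  | 0, x => act_wedge_deg_one A u x
  | l + 1, v => by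
    have h : actₗ A ∘ₗ wedgeₗ k (l + 1 + 1) u = wedgeₗ k (l + 1 + 1) (act A u) ∘ₗ actₗ A :=
      linearMap_ext_wedge fun S x => by
        simp only [LinearMap.comp_apply, wedgeₗ_apply, actₗ_apply]
        rw [← wedge_assoc, act_wedge_deg_one, act_wedge A u S, wedge_assoc, ← act_wedge_deg_one]
    exact LinearMap.congr_fun h v

lemma act_mul (A B : Matrix (Fin 9) (Fin 9) ℂ) :
    ∀ {k : ℕ} (u : Lam (k + 1)), act (A * B) u = act A (act B u)
  | 0, x => by
    funext s
    obtain ⟨i, rfl⟩ := idx1Equiv.surjective s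
    simp only [idx1Equiv_apply, act_apply_idx1, mul_apply, sum_mul, mul_sum, mul_assoc]
    exact sum_comm
  | k + 1, u => by
    have h : actₗ (A * B) = actₗ A ∘ₗ (actₗ B : Lam (k + 1 + 1) →ₗ[ℂ] _) :=
      linearMap_ext_wedge fun S x => by
        simp only [LinearMap.comp_apply, actₗ_apply, act_wedge_deg_one, act_mul A B S,
          act_mul A B x]
    exact LinearMap.congr_fun h u

lemma act_one : ∀ {k : ℕ} (u : Lam (k + 1)), act 1 u = u
  | 0, x => by
    funext s
    obtain ⟨i, rfl⟩ := idx1Equiv.surjective s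
    simp [act_apply_idx1, one_apply]
  | k + 1, u => by
    have h : actₗ 1 = (LinearMap.id : Lam (k + 1 + 1) →ₗ[ℂ] _) :=
      linearMap_ext_wedge fun S x => by
        simp only [actₗ_apply, act_wedge_deg_one, act_one S, act_one x, LinearMap.id_apply]
    exact LinearMap.congr_fun h u

end Compound

section Hodge

variable {k l : ℕ}

lemma compound_transpose (A : Matrix (Fin 9) (Fin 9) ℂ) :
    (compound Aᵀ : Matrix (Idx k) (Idx k) ℂ) = (compound A)ᵀ := by
  ext s t
  exact det_transpose _

lemma ip_eq_dotProduct (u v : Lam k) : ip u v = u ⬝ᵥ v := rfl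

lemma ip_act (A : Matrix (Fin 9) (Fin 9) ℂ) (x y : Lam k) : ip (act A x) y = ip x (act Aᵀ y) := by
  rw [ip_eq_dotProduct, ip_eq_dotProduct, act_eq_mulVec, act_eq_mulVec, compound_transpose,
    mulVec_transpose, dotProduct_comm, dotProduct_mulVec, dotProduct_comm]

lemma ip_act_act_transpose_inv (A : Matrix (Fin 9) (Fin 9) ℂ) (hA : IsUnit A.det)
    (u v : Lam (k + 1)) : ip (act A u) (act (Aᵀ)⁻¹ v) = ip u v := by
  rw [ip_act, ← act_mul, mul_nonsing_inv _ (by rwa [det_transpose]), act_one]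

lemma wedge_apply_univ (h : k + l = 9) (u : Lam k) (w : Lam l) (W : Idx (k + l))
    (hW : W.1 = univ) : wedge u w W = ip (hstar h u) w := by
  have hcompl (s : Idx k) : #s.1ᶜ = l := by rw [card_compl, s.2, Fintype.card_fin]; omega
  let e : Idx k ≃ Idx l :=
    { toFun s := ⟨s.1ᶜ, hcompl s⟩
      invFun t := ⟨t.1ᶜ, by rw [card_compl, t.2, Fintype.card_fin]; omega⟩
      left_inv s := Subtype.ext (compl_compl s.1)
      right_inv t := Subtype.ext (compl_compl t.1) }
  rw [wedge_apply, ip]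
  refine Fintype.sum_equiv e _ _ fun s => ?_
  have hsub : s.1 ⊆ W.1 := hW ▸ subset_univ _
  have hdiff : W.1 \ s.1 = s.1ᶜ := by rw [hW, compl_eq_univ_sdiff]
  rw [dif_pos hsub, show (⟨W.1 \ s.1, _⟩ : Idx l) = e s from Subtype.ext hdiff, hdiff]
  simp only [hstar, e, Equiv.coe_fn_mk, compl_compl]

lemma act_apply_univ {n : ℕ} (A : Matrix (Fin 9) (Fin 9) ℂ) (ξ : Lam n) (W : Idx n)
    (hW : W.1 = univ) : act A ξ W = A.det * ξ W := by
  obtain rfl : n = 9 := by rw [← W.2, hW, card_univ, Fintype.card_fin]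
  have hunique (t : Idx 9) : t = W :=
    Subtype.ext ((eq_univ_of_card t.1 (by rw [t.2, Fintype.card_fin])).trans hW.symm)
  have henum : ⇑(enum W) = id :=
    (orderEmbOfFin_unique W.2 (fun i => hW ▸ mem_univ i) strictMono_id).symm
  rw [act, Fintype.sum_eq_single W fun t ht => absurd (hunique t) ht]
  congr 1
  simp only [minor, coe_orderIsoOfFin_eq_enum, henum, id]
  rfl

lemma hstar_act (h : k + (l + 1) = 9) (A : Matrix (Fin 9) (Fin 9) ℂ) (hA : IsUnit A.det)
    (z : Lam k) : hstar h (act A z) = A.det • act (Aᵀ)⁻¹ (hstar h z) := by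
  let W : Idx (k + (l + 1)) := ⟨univ, by rw [card_univ, Fintype.card_fin, h]⟩
  have key (w : Lam (l + 1)) :
      ip (hstar h (act A z)) w = ip (A.det • act (Aᵀ)⁻¹ (hstar h z)) w := by
    calc ip (hstar h (act A z)) w
        = wedge (act A z) (act A (act A⁻¹ w)) W := by
          rw [← act_mul, mul_nonsing_inv _ hA, act_one, wedge_apply_univ h _ _ W rfl]
      _ = A.det * wedge z (act A⁻¹ w) W := by rw [← act_wedge, act_apply_univ A _ W rfl]
      _ = A.det * ip (act (A⁻¹)ᵀ (hstar h z)) w := by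
          rw [wedge_apply_univ h _ _ W rfl, ip_act, transpose_transpose]
      _ = ip (A.det • act (Aᵀ)⁻¹ (hstar h z)) w := by
          rw [transpose_nonsing_inv, ip_eq_dotProduct, ip_eq_dotProduct, smul_dotProduct,
            smul_eq_mul]
  funext t
  simpa [ip_eq_dotProduct, dotProduct_single] using key (Pi.single t 1)

end Hodge

section Cross

lemma vec_idx1 (x : Fin 9 → ℂ) (i : Fin 9) : vec x (idx1 i) = x i := sum_singleton _ _

lemma act_vec (A : Matrix (Fin 9) (Fin 9) ℂ) (y : Fin 9 → ℂ) : act A (vec y) = vec (A *ᵥ y) := by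
  funext s
  obtain ⟨i, rfl⟩ := idx1Equiv.surjective s
  simp only [idx1Equiv_apply, act_apply_idx1, vec_idx1]
  rfl

lemma unvec_act (A : Matrix (Fin 9) (Fin 9) ℂ) (z : Lam 1) : unvec (act A z) = A *ᵥ unvec z :=
  funext (act_apply_idx1 A z)

def vecₗ : (Fin 9 → ℂ) →ₗ[ℂ] Lam 1 where
  toFun := vec
  map_add' _ _ := funext fun _ => sum_add_distrib
  map_smul' _ _ := funext fun _ => (mul_sum _ _ _).symm

def unvecₗ : Lam 1 →ₗ[ℂ] Fin 9 → ℂ := LinearMap.funLeft ℂ ℂ idx1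

def hstarₗ {k l : ℕ} (h : k + l = 9) : Lam k →ₗ[ℂ] Lam l where
  toFun := hstar h
  map_add' _ _ := funext fun _ => mul_add _ _ _
  map_smul' _ _ := funext fun _ => mul_left_comm _ _ _

lemma hstar_smul {k l : ℕ} (h : k + l = 9) (c : ℂ) (z : Lam k) :
    hstar h (c • z) = c • hstar h z :=
  (hstarₗ h).map_smul c z

def crossₗ (u v : Lam 3) : Module.End ℂ (Fin 9 → ℂ) :=
  unvecₗ ∘ₗ hstarₗ (by norm_num) ∘ₗ wedgeₗ 3 5 v ∘ₗ hstarₗ (by norm_num) ∘ₗ wedgeₗ 3 1 u ∘ₗ vecₗ +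
    ((2 / 3 : ℂ) * ip u v) • LinearMap.id

lemma crossₗ_apply (u v : Lam 3) (y : Fin 9 → ℂ) :
    crossₗ u v y = crossApp u v y := by
  funext i
  simp only [crossₗ, LinearMap.add_apply, LinearMap.comp_apply, LinearMap.smul_apply,
    LinearMap.id_apply, Pi.add_apply, Pi.smul_apply, smul_eq_mul]
  rfl

lemma crossMat_eq_toMatrix' (u v : Lam 3) : crossMat u v = LinearMap.toMatrix' (crossₗ u v) := by
  ext i j
  rw [LinearMap.toMatrix'_apply, crossₗ_apply, crossMat, of_apply]
  congr 2
  exact (funext fun l => Pi.single_apply j 1 l).symm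

lemma crossMat_mulVec (u v : Lam 3) (y : Fin 9 → ℂ) : crossMat u v *ᵥ y = crossApp u v y := by
  rw [crossMat_eq_toMatrix', LinearMap.toMatrix'_mulVec, crossₗ_apply]

lemma crossApp_eq (u v : Lam 3) (y : Fin 9 → ℂ) :
    crossApp u v y = unvec (star8 (wedge v (star4 (wedge u (vec y))))) + ((2 / 3) * ip u v) • y :=
  rfl

lemma crossApp_act (A : Matrix (Fin 9) (Fin 9) ℂ) (hA : IsUnit A.det) (u v : Lam 3)
    (y : Fin 9 → ℂ) :
    crossApp (act A u) (act (Aᵀ)⁻¹ v) (A *ᵥ y) = A *ᵥ crossApp u v y := by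
  have hB : IsUnit (Aᵀ)⁻¹.det := by rw [det_nonsing_inv, det_transpose]; exact hA.ringInverse
  have hBA : ((Aᵀ)⁻¹ᵀ)⁻¹ = A := by
    rw [transpose_nonsing_inv, transpose_transpose, nonsing_inv_nonsing_inv _ hA]
  have hdet : A.det * (Aᵀ)⁻¹.det = 1 := by
    rw [det_nonsing_inv, det_transpose, Ring.mul_inverse_cancel _ hA]
  rw [crossApp_eq, crossApp_eq, ← act_vec, ← act_wedge, star4, hstar_act _ A hA,
    wedge_smul_right, ← act_wedge, star8, hstar_smul, hstar_act _ _ hB, hBA, smul_smul,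
    hdet, one_smul, unvec_act, ip_act_act_transpose_inv A hA, mulVec_add, mulVec_smul]

theorem mul_crossMat_mul_inv (A : Matrix (Fin 9) (Fin 9) ℂ) (hA : IsUnit A.det) (u v : Lam 3) :
    A * crossMat u v * A⁻¹ = crossMat (act A u) (act (Aᵀ)⁻¹ v) := by
  have hcomm : A * crossMat u v = crossMat (act A u) (act (Aᵀ)⁻¹ v) * A :=
    ext_iff_mulVec.2 fun y => by
      rw [← mulVec_mulVec, ← mulVec_mulVec, crossMat_mulVec, crossMat_mulVec, crossApp_act A hA]
  rw [hcomm, mul_nonsing_inv_cancel_right _ _ hA]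

end Cross

/-- For `A ∈ SL(9,ℂ)`, `A ∘ (u × v) ∘ A⁻¹ = (Au) × ((Aᵀ)⁻¹v)`. -/
theorem stmt5 (A : Matrix (Fin 9) (Fin 9) ℂ) (hA : A.det = 1) (u v : Lam 3) :
    A * crossMat u v * A⁻¹ = crossMat (act A u) (act (Aᵀ)⁻¹ v) :=
  mul_crossMat_mul_inv A (hA ▸ isUnit_one) u v

end
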